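/- Let λ ≥ 1, and define l'_n := λ l_n and r'_n := λ r_n for every n. Let Γ_{nm}(h) and K be built from ({l_n},{r_n}) and Γ'_{nm}(h) and K' be built (by the same formulas) from ({l'_n},{r'_n}). If K is finite, then K' ≤ λ K + (1 + λ) K^λ. -/

import Mathlib

/-- For a real number `x`, its positive part `x₊ = max {x, 0}`. -/
noncomputable def ppart (x : ℝ) : ℝ := max x 0

/-- `Δ(k) = e^{-l_k} + e^{-l_{k+1}} + e^{-(1/2)(l_k + l_{k+1} - r_k)₊} + (r_k - l_k - l_{k+1})₊`. -/
noncomputable def DeltaF (l r : ℕ → ℝ) (k : ℕ) : ℝ :=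
  Real.exp (-l k) + Real.exp (-l (k + 1)) +
    Real.exp (-(1/2) * ppart (l k + l (k + 1) - r k)) + ppart (r k - l k - l (k + 1))

/-- The function `Γ_{nm}(h)` associated to the sequences `{l_n}` and `{r_n}`. -/
noncomputable def GammaF (l r : ℕ → ℝ) (n m : ℕ) (h : ℝ) : ℝ :=
  if m < n then
    (if l m ≤ h then
      ppart (r m + h - l (m + 1)) + Real.exp h * ∑ k ∈ Finset.Icc (m + 1) (n - 1), DeltaF l r k
    else
      l m - h + Real.exp h * ∑ k ∈ Finset.Icc m (n - 1), DeltaF l r k)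
  else if m = n then min h (l n - h)
  else
    (if l m ≤ h then
      ppart (r (m - 1) + h - l (m - 1)) + Real.exp h * ∑ k ∈ Finset.Icc n (m - 2), DeltaF l r k
    else
      l m - h + Real.exp h * ∑ k ∈ Finset.Icc n (m - 1), DeltaF l r k)

/-- `A_n(h)`: the largest positive integer `m < n` with `l_m ≤ h`, or `1` if there is none. -/
noncomputable def AFun (l : ℕ → ℝ) (n : ℕ) (h : ℝ) : ℕ :=
  sSup ({1} ∪ {m : ℕ | 1 ≤ m ∧ m < n ∧ l m ≤ h})

/-- `B_n(h)`: the smallest integer `m > n` with `l_m ≤ h`, or `∞` if there is none. -/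
noncomputable def BFun (l : ℕ → ℝ) (n : ℕ) (h : ℝ) : ℕ∞ :=
  sInf {x : ℕ∞ | ∃ m : ℕ, x = (m : ℕ∞) ∧ n < m ∧ l m ≤ h}

/-- `inf_{m ≥ 1} Γ_{nm}(h)`. -/
noncomputable def infGammaF (l r : ℕ → ℝ) (n : ℕ) (h : ℝ) : ℝ :=
  sInf {x : ℝ | ∃ m : ℕ, 1 ≤ m ∧ x = GammaF l r n m h}

/-- The set whose supremum is `K = sup_{n ≥ 1} sup_{h ∈ [0, l_n]} inf_{m ≥ 1} Γ_{nm}(h)`. -/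
def KSetF (l r : ℕ → ℝ) : Set ℝ :=
  {x : ℝ | ∃ n : ℕ, 1 ≤ n ∧ ∃ h : ℝ, 0 ≤ h ∧ h ≤ l n ∧ x = infGammaF l r n h}

/-!
Scaling `l, r` by `λ` raises each exponential term of `Δ(k)` to the power `λ` and multiplies each
positive part by `λ`. The positive part `(r_k - l_k - l_{k+1})₊` is nonzero only when the third
exponential equals `1`, so Bernoulli's inequality `1 + λp ≤ (1 + p)^λ` and the superadditivity of
`t ↦ t^λ` give `Δ'(k) ≤ Δ(k)^λ`, hence `e^{λh} ∑ Δ' ≤ (e^h ∑ Δ)^λ`. Every `Γ_{nm}(h)` is a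
nonnegative term that scales linearly plus such an exponential sum, so
`Γ'_{nm}(λh) ≤ λ Γ_{nm}(h) + Γ_{nm}(h)^λ`. Since `x ↦ λx + x^λ` is continuous and increasing on
`[0, ∞)`, the same bound passes to the infimum over `m`, and that infimum is at most `K`.
-/

open Finset

lemma ppart_nonneg (x : ℝ) : 0 ≤ ppart x := le_max_right _ _

lemma ppart_const_mul {c : ℝ} (hc : 0 ≤ c) (x : ℝ) : ppart (c * x) = c * ppart x := by
  simp [ppart, mul_max_of_nonneg _ _ hc]

lemma Finset.sum_rpow_le_rpow_sum {ι : Type*} (s : Finset ι) {f : ι → ℝ}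
    (hf : ∀ i ∈ s, 0 ≤ f i) {p : ℝ} (hp : 1 ≤ p) :
    ∑ i ∈ s, f i ^ p ≤ (∑ i ∈ s, f i) ^ p := by
  induction s using Finset.cons_induction with
  | empty => simp [Real.zero_rpow (by linarith : p ≠ 0)]
  | cons a s _ ih =>
    simp only [Finset.forall_mem_cons] at hf
    rw [sum_cons, sum_cons]
    calc f a ^ p + ∑ i ∈ s, f i ^ p ≤ f a ^ p + (∑ i ∈ s, f i) ^ p := by gcongr; exact ih hf.2
      _ ≤ (f a + ∑ i ∈ s, f i) ^ p :=
        Real.add_rpow_le_rpow_add hf.1 (sum_nonneg hf.2) hp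

/-- The closedness of `[c, ∞)` lets a lower bound on `f` over `A` pass to `f (sInf A)`. -/
lemma le_apply_csInf_of_continuousAt {α β : Type*} [ConditionallyCompleteLinearOrder α]
    [TopologicalSpace α] [OrderTopology α] [Preorder β] [TopologicalSpace β]
    [ClosedIciTopology β] {A : Set α} {f : α → β} {c : β} (hne : A.Nonempty) (hbdd : BddBelow A)
    (hf : ContinuousAt f (sInf A)) (hc : ∀ a ∈ A, c ≤ f a) : c ≤ f (sInf A) := by
  have hsub : f '' A ⊆ Set.Ici c := by
    rintro _ ⟨a, ha, rfl⟩
    exact hc a ha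
  exact closure_minimal hsub isClosed_Ici (mem_closure_image hf (csInf_mem_closure hne hbdd))

section Scaling

variable (l r : ℕ → ℝ) {lam : ℝ}

lemma DeltaF_nonneg (k : ℕ) : 0 ≤ DeltaF l r k := by
  unfold DeltaF
  have := ppart_nonneg (r k - l k - l (k + 1))
  positivity

lemma DeltaF_const_mul_le (hlam : 1 ≤ lam) (k : ℕ) :
    DeltaF (fun i => lam * l i) (fun i => lam * r i) k ≤ DeltaF l r k ^ lam := by
  have hlam0 : 0 ≤ lam := by linarith
  set a := Real.exp (-l k)
  set b := Real.exp (-l (k + 1))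
  set c := Real.exp (-(1 / 2) * ppart (l k + l (k + 1) - r k)) with hc_def
  set p := ppart (r k - l k - l (k + 1))
  have hexp : ∀ x, Real.exp (-(lam * x)) = Real.exp (-x) ^ lam := fun x => by
    rw [← Real.exp_mul]; ring_nf
  have hc : Real.exp (-(1 / 2) * ppart (lam * l k + lam * l (k + 1) - lam * r k)) = c ^ lam := by
    rw [show lam * l k + lam * l (k + 1) - lam * r k = lam * (l k + l (k + 1) - r k) by ring,
      ppart_const_mul hlam0, ← Real.exp_mul]
    ring_nf
  have hp : ppart (lam * r k - lam * l k - lam * l (k + 1)) = lam * p := by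
    rw [← ppart_const_mul hlam0]; ring_nf
  -- `p > 0` forces `r_k > l_k + l_{k+1}`, i.e. `c = 1`, and then this is Bernoulli's inequality.
  have hcp : c ^ lam + lam * p ≤ (c + p) ^ lam := by
    rcases (show 0 ≤ p from ppart_nonneg _).eq_or_lt with hp0 | hp0
    · simp [← hp0]
    · have hpos : 0 < r k - l k - l (k + 1) := lt_max_iff.1 hp0 |>.resolve_right (lt_irrefl 0)
      have hc1 : c = 1 := by
        simp [hc_def, ppart, max_eq_right (by linarith : l k + l (k + 1) - r k ≤ 0)]
      rw [hc1, Real.one_rpow]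
      exact one_add_mul_self_le_rpow_one_add (by linarith) hlam
  have ha : 0 ≤ a := (Real.exp_pos _).le
  have hb : 0 ≤ b := (Real.exp_pos _).le
  have hcp0 : 0 ≤ c + p := add_nonneg (Real.exp_pos _).le (ppart_nonneg _)
  calc DeltaF (fun i => lam * l i) (fun i => lam * r i) k
      = a ^ lam + b ^ lam + (c ^ lam + lam * p) := by simp only [DeltaF, hexp, hc, hp]; ring
    _ ≤ a ^ lam + b ^ lam + (c + p) ^ lam := by gcongr
    _ ≤ (a + b) ^ lam + (c + p) ^ lam := by gcongr; exact Real.add_rpow_le_rpow_add ha hb hlam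
    _ ≤ (a + b + (c + p)) ^ lam := Real.add_rpow_le_rpow_add (add_nonneg ha hb) hcp0 hlam
    _ = DeltaF l r k ^ lam := by simp only [DeltaF, a, b, c, p, add_assoc]

lemma exp_mul_sum_DeltaF_nonneg (h : ℝ) (s : Finset ℕ) :
    0 ≤ Real.exp h * ∑ k ∈ s, DeltaF l r k :=
  mul_nonneg (Real.exp_pos h).le (sum_nonneg fun k _ => DeltaF_nonneg l r k)

lemma exp_mul_sum_DeltaF_const_mul_le (hlam : 1 ≤ lam) (h : ℝ) (s : Finset ℕ) :
    Real.exp (lam * h) * ∑ k ∈ s, DeltaF (fun i => lam * l i) (fun i => lam * r i) k ≤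
      (Real.exp h * ∑ k ∈ s, DeltaF l r k) ^ lam := by
  have hlam0 : 0 ≤ lam := by linarith
  have hexp0 := (Real.exp_pos h).le
  calc Real.exp (lam * h) * ∑ k ∈ s, DeltaF (fun i => lam * l i) (fun i => lam * r i) k
      ≤ ∑ k ∈ s, (Real.exp h * DeltaF l r k) ^ lam := by
        rw [mul_sum]
        gcongr with k
        rw [Real.mul_rpow hexp0 (DeltaF_nonneg l r k), ← Real.exp_mul, mul_comm h]
        gcongr
        exact DeltaF_const_mul_le l r hlam k
    _ ≤ (∑ k ∈ s, Real.exp h * DeltaF l r k) ^ lam :=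
        s.sum_rpow_le_rpow_sum (fun k _ => mul_nonneg hexp0 (DeltaF_nonneg l r k)) hlam
    _ = (Real.exp h * ∑ k ∈ s, DeltaF l r k) ^ lam := by rw [mul_sum]

lemma GammaF_nonneg {n : ℕ} (m : ℕ) {h : ℝ} (hh : 0 ≤ h) (hhn : h ≤ l n) :
    0 ≤ GammaF l r n m h := by
  unfold GammaF
  split_ifs
  · exact add_nonneg (ppart_nonneg _) (exp_mul_sum_DeltaF_nonneg l r h _)
  · exact add_nonneg (by linarith) (exp_mul_sum_DeltaF_nonneg l r h _)
  · exact le_min hh (by linarith)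
  · exact add_nonneg (ppart_nonneg _) (exp_mul_sum_DeltaF_nonneg l r h _)
  · exact add_nonneg (by linarith) (exp_mul_sum_DeltaF_nonneg l r h _)

lemma add_le_mul_add_add_rpow_add {P S P' S' : ℝ} (hlam : 0 ≤ lam) (hP : 0 ≤ P) (hS : 0 ≤ S)
    (hP' : P' ≤ lam * P) (hS' : S' ≤ S ^ lam) : P' + S' ≤ lam * (P + S) + (P + S) ^ lam := by
  calc P' + S' ≤ lam * P + S ^ lam := add_le_add hP' hS'
    _ ≤ lam * (P + S) + (P + S) ^ lam := by gcongr <;> linarith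

lemma GammaF_const_mul_le (hlam : 1 ≤ lam) {n : ℕ} (m : ℕ) {h : ℝ} (hh : 0 ≤ h)
    (hhn : h ≤ l n) :
    GammaF (fun k => lam * l k) (fun k => lam * r k) n m (lam * h) ≤
      lam * GammaF l r n m h + GammaF l r n m h ^ lam := by
  have hlam0 : 0 < lam := by linarith
  have hsum := exp_mul_sum_DeltaF_const_mul_le l r hlam h
  have hexp := exp_mul_sum_DeltaF_nonneg l r h
  simp only [GammaF, mul_le_mul_iff_right₀ hlam0]
  split_ifs
  · refine add_le_mul_add_add_rpow_add hlam0.le (ppart_nonneg _) (hexp _) ?_ (hsum _)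
    rw [← ppart_const_mul hlam0.le, mul_sub, mul_add]
  · exact add_le_mul_add_add_rpow_add hlam0.le (by linarith) (hexp _) (by rw [mul_sub]) (hsum _)
  · rw [← mul_sub, ← mul_min_of_nonneg _ _ hlam0.le]
    have := Real.rpow_nonneg (le_min hh (sub_nonneg.2 hhn)) lam
    linarith
  · refine add_le_mul_add_add_rpow_add hlam0.le (ppart_nonneg _) (hexp _) ?_ (hsum _)
    rw [← ppart_const_mul hlam0.le, mul_sub, mul_add]
  · exact add_le_mul_add_add_rpow_add hlam0.le (by linarith) (hexp _) (by rw [mul_sub]) (hsum _)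

lemma infGammaF_le {n m : ℕ} (hm : 1 ≤ m) {h : ℝ} (hh : 0 ≤ h) (hhn : h ≤ l n) :
    infGammaF l r n h ≤ GammaF l r n m h := by
  refine csInf_le ⟨0, ?_⟩ ⟨m, hm, rfl⟩
  rintro _ ⟨m', -, rfl⟩
  exact GammaF_nonneg l r m' hh hhn

lemma infGammaF_nonneg {n : ℕ} {h : ℝ} (hh : 0 ≤ h) (hhn : h ≤ l n) :
    0 ≤ infGammaF l r n h := by
  refine Real.sInf_nonneg ?_
  rintro _ ⟨m, -, rfl⟩
  exact GammaF_nonneg l r m hh hhn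

lemma infGammaF_const_mul_le (hlam : 1 ≤ lam) {n : ℕ} {h : ℝ} (hh : 0 ≤ h) (hhn : h ≤ l n) :
    infGammaF (fun k => lam * l k) (fun k => lam * r k) n (lam * h) ≤
      lam * infGammaF l r n h + infGammaF l r n h ^ lam := by
  have hlam0 : 0 < lam := by linarith
  refine le_apply_csInf_of_continuousAt (f := fun x => lam * x + x ^ lam)
    ⟨_, 1, le_rfl, rfl⟩ ⟨0, ?_⟩ ?_ ?_
  · rintro _ ⟨m, -, rfl⟩
    exact GammaF_nonneg l r m hh hhn
  · exact ((continuous_const.mul continuous_id).add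
      (Real.continuous_rpow_const hlam0.le)).continuousAt
  · rintro _ ⟨m, hm, rfl⟩
    calc infGammaF (fun k => lam * l k) (fun k => lam * r k) n (lam * h)
        ≤ GammaF (fun k => lam * l k) (fun k => lam * r k) n m (lam * h) :=
          infGammaF_le _ _ hm (by positivity) (by gcongr)
      _ ≤ lam * GammaF l r n m h + GammaF l r n m h ^ lam := GammaF_const_mul_le l r hlam m hh hhn

end Scaling

theorem stmt18_general (l r : ℕ → ℝ) (lam : ℝ) (hlam : 1 ≤ lam)
    (hbdd : BddAbove (KSetF l r)) :
    ∀ n : ℕ, 1 ≤ n → ∀ h : ℝ, 0 ≤ h → h ≤ lam * l n →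
      infGammaF (fun k => lam * l k) (fun k => lam * r k) n h ≤
        lam * sSup (KSetF l r) + (1 + lam) * sSup (KSetF l r) ^ lam := by
  intro n hn h hh hhn
  have hlam0 : 0 < lam := by linarith
  obtain ⟨h₀, rfl⟩ : ∃ h₀, h = lam * h₀ := ⟨h / lam, by field_simp⟩
  have hh₀ : 0 ≤ h₀ := (mul_nonneg_iff_of_pos_left hlam0).1 hh
  have hh₀n : h₀ ≤ l n := le_of_mul_le_mul_left hhn hlam0
  set K := sSup (KSetF l r)
  set I := infGammaF l r n h₀
  have hIK : I ≤ K := le_csSup hbdd ⟨n, hn, h₀, hh₀, hh₀n, rfl⟩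
  have hI0 : 0 ≤ I := infGammaF_nonneg l r hh₀ hh₀n
  have hKpow : 0 ≤ K ^ lam := Real.rpow_nonneg (hI0.trans hIK) lam
  calc infGammaF (fun k => lam * l k) (fun k => lam * r k) n (lam * h₀)
      ≤ lam * I + I ^ lam := infGammaF_const_mul_le l r hlam hh₀ hh₀n
    _ ≤ lam * K + K ^ lam := by gcongr
    _ ≤ lam * K + (1 + lam) * K ^ lam := by nlinarith

/-- Let `λ ≥ 1` and define `l'_n := λ l_n`, `r'_n := λ r_n`. If
`K = sup_{n ≥ 1} sup_{h ∈ [0, l_n]} inf_{m ≥ 1} Γ_{nm}(h)` is finite, then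
`K' ≤ λ K + (1 + λ) K^λ`, where `K'` is built by the same formulas from `({l'_n}, {r'_n})`
(the bound on `K'` is expressed by bounding each `inf_{m ≥ 1} Γ'_{nm}(h)` for `n ≥ 1`,
`h ∈ [0, l'_n]`). -/
theorem stmt18 (l r : ℕ → ℝ) (hl : ∀ n : ℕ, 1 ≤ n → 0 < l n)
    (hr : ∀ n : ℕ, 1 ≤ n → 0 ≤ r n) (lam : ℝ) (hlam : 1 ≤ lam)
    (hbdd : BddAbove (KSetF l r)) :
    ∀ n : ℕ, 1 ≤ n → ∀ h : ℝ, 0 ≤ h → h ≤ lam * l n →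
      infGammaF (fun k => lam * l k) (fun k => lam * r k) n h ≤
        lam * sSup (KSetF l r) + (1 + lam) * sSup (KSetF l r) ^ lam :=
  stmt18_general l r lam hlam hbdd
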